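/- If the vector field f of the ODE system ẋ = f(x,t) is globally Lipschitz in x uniformly in t, then the waveform relaxation iteration x^{I+1} solving ẋ_i^{I+1} = f_i(x_i^{I+1}, d_i^I, t) (where d_i^I collects the other components from iteration I) converges uniformly on any finite time interval [0,T] to the unique solution of the full system. -/

import Mathlib

/-!
The error `e_I = X I - x` of the iterates is measured in the weighted sup norm
`sup_t e^{-Lt} ‖e_I(t)‖` with `L > K`. Component `i` of `e_{I+1}` vanishes at `0` and its
derivative is bounded by `K (|e_{I+1,i}| + ‖e_I‖)`, because the frozen vector differs from the exact
solution by `e_{I+1,i}` in coordinate `i` and by `e_I` elsewhere. A comparison with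
`c (e^{Lt} - 1)` then shows that one sweep multiplies the weighted norm by at most `K / (L - K) < 1`,
so the errors decay geometrically, uniformly on `[0, T]`.
-/

open Set Filter Topology Function Real NNReal

section Comparison

variable {F : Type*} [NormedAddCommGroup F] [NormedSpace ℝ F]
  {u u' : ℝ → F} {T K L B : ℝ}

theorem norm_le_mul_exp_sub_one_of_lt
    (hu : ContinuousOn u (Icc 0 T)) (hu' : ∀ s ∈ Ico 0 T, HasDerivWithinAt u (u' s) (Ici s) s)
    (hu0 : u 0 = 0) (hK : 0 ≤ K) (hB : 0 ≤ B) (hKL : K < L)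
    (bound : ∀ s ∈ Ico 0 T, ‖u' s‖ ≤ K * ‖u s‖ + B * exp (L * s))
    {c : ℝ} (hc : B / (L - K) < c) :
    ∀ t ∈ Icc 0 T, ‖u t‖ ≤ c * (exp (L * t) - 1) := by
  have hLK : 0 < L - K := sub_pos.2 hKL
  have hc0 : 0 < c := (div_nonneg hB hLK.le).trans_lt hc
  have hBc : B < c * (L - K) := (div_lt_iff₀ hLK).1 hc
  have hderiv : ∀ s, HasDerivAt (fun s => c * (exp (L * s) - 1)) (c * (L * exp (L * s))) s := by
    intro s
    exact ((((hasDerivAt_id' s).const_mul L).exp.sub_const 1).const_mul c).congr_deriv (by ring)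
  refine image_norm_le_of_norm_deriv_right_lt_deriv_boundary hu hu' (by simp [hu0]) hderiv ?_
  intro s hs hus
  have hexp : 0 < exp (L * s) := exp_pos _
  calc ‖u' s‖ ≤ K * (c * (exp (L * s) - 1)) + B * exp (L * s) := hus ▸ bound s hs
    _ ≤ (K * c + B) * exp (L * s) := by nlinarith [mul_nonneg hK hc0.le]
    _ < c * (L * exp (L * s)) := by nlinarith

theorem norm_le_div_mul_exp_sub_one
    (hu : ContinuousOn u (Icc 0 T)) (hu' : ∀ s ∈ Ico 0 T, HasDerivWithinAt u (u' s) (Ici s) s)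
    (hu0 : u 0 = 0) (hK : 0 ≤ K) (hB : 0 ≤ B) (hKL : K < L)
    (bound : ∀ s ∈ Ico 0 T, ‖u' s‖ ≤ K * ‖u s‖ + B * exp (L * s)) :
    ∀ t ∈ Icc 0 T, ‖u t‖ ≤ B / (L - K) * (exp (L * t) - 1) := by
  intro t ht
  have hlim : Tendsto (fun c => c * (exp (L * t) - 1)) (𝓝[>] (B / (L - K)))
      (𝓝 (B / (L - K) * (exp (L * t) - 1))) :=
    ((continuous_id.mul continuous_const).tendsto _).mono_left nhdsWithin_le_nhds
  exact ge_of_tendsto hlim <| eventually_nhdsWithin_of_forall fun c hc =>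
    norm_le_mul_exp_sub_one_of_lt hu hu' hu0 hK hB hKL bound hc t ht

end Comparison

theorem norm_update_sub_le {ι G : Type*} [Fintype ι] [DecidableEq ι] [SeminormedAddCommGroup G]
    (v w : ι → G) (i : ι) (a : G) :
    ‖update v i a - w‖ ≤ max ‖v - w‖ ‖a - w i‖ := by
  refine (pi_norm_le_iff_of_nonneg (le_max_of_le_left (norm_nonneg _))).2 fun j => ?_
  rcases eq_or_ne j i with rfl | hji
  · simp
  · simpa [hji] using (norm_le_pi_norm (v - w) j).trans (le_max_left _ _)

theorem tendstoUniformlyOn_of_forall_dist_le {α β ι : Type*} [PseudoMetricSpace β]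
    {F : ι → α → β} {f : α → β} {l : Filter ι} {s : Set α} {a : ι → ℝ}
    (h : ∀ i, ∀ x ∈ s, dist (f x) (F i x) ≤ a i) (ha : Tendsto a l (𝓝 0)) :
    TendstoUniformlyOn F f l s :=
  Metric.tendstoUniformlyOn_iff.2 fun _ hε =>
    (ha.eventually (gt_mem_nhds hε)).mono fun i hi x hx => (h i x hx).trans_lt hi

section WaveformRelaxation

variable {ι : Type*} [Fintype ι] [DecidableEq ι] {f : (ι → ℝ) → ℝ → ι → ℝ} {K : ℝ≥0}
  {T L : ℝ} {x : ℝ → ι → ℝ}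

theorem waveformRelaxation_sweep_error_le
    (hf : ∀ t, LipschitzWith K (fun x => f x t))
    (hx : ∀ t ∈ Icc 0 T, HasDerivAt x (f (x t) t) t)
    {Y Z : ℝ → ι → ℝ} (hZ0 : Z 0 = x 0)
    (hZ : ∀ t ∈ Icc 0 T, ∀ i,
      HasDerivAt (fun s => Z s i) (f (update (Y t) i (Z t i)) t i) t)
    (hKL : (K : ℝ) < L) {E : ℝ} (hE : 0 ≤ E)
    (hY : ∀ t ∈ Icc 0 T, ‖Y t - x t‖ ≤ E * exp (L * t)) :
    ∀ t ∈ Icc 0 T, ‖Z t - x t‖ ≤ K / (L - K) * E * exp (L * t) := by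
  have hLK : 0 < L - K := sub_pos.2 hKL
  intro t ht
  refine (pi_norm_le_iff_of_nonneg (by positivity)).2 fun i => ?_
  set u : ℝ → ℝ := fun s => Z s i - x s i
  have hu : ∀ s ∈ Icc 0 T,
      HasDerivAt u (f (update (Y s) i (Z s i)) s i - f (x s) s i) s := fun s hs =>
    (hZ s hs i).sub (hasDerivAt_pi.1 (hx s hs) i)
  have bound : ∀ s ∈ Ico 0 T, ‖f (update (Y s) i (Z s i)) s i - f (x s) s i‖ ≤
      K * ‖u s‖ + K * E * exp (L * s) := by
    intro s hs
    have hYs := hY s (Ico_subset_Icc_self hs)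
    calc ‖f (update (Y s) i (Z s i)) s i - f (x s) s i‖
        ≤ ‖f (update (Y s) i (Z s i)) s - f (x s) s‖ := norm_le_pi_norm (f _ s - f _ s) i
      _ ≤ K * ‖update (Y s) i (Z s i) - x s‖ := (hf s).norm_sub_le _ _
      _ ≤ K * max ‖Y s - x s‖ ‖u s‖ := by gcongr; exact norm_update_sub_le _ _ _ _
      _ ≤ K * (‖u s‖ + E * exp (L * s)) := by
        gcongr
        exact max_le (hYs.trans (le_add_of_nonneg_left (norm_nonneg _)))
          (le_add_of_nonneg_right (by positivity))
      _ = K * ‖u s‖ + K * E * exp (L * s) := by ring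
  have hut := norm_le_div_mul_exp_sub_one
    (fun s hs => (hu s hs).continuousAt.continuousWithinAt)
    (fun s hs => (hu s (Ico_subset_Icc_self hs)).hasDerivWithinAt)
    (by simp [u, hZ0]) K.coe_nonneg (by positivity) hKL bound t ht
  calc ‖Z t i - x t i‖ = ‖u t‖ := rfl
    _ ≤ K * E / (L - K) * (exp (L * t) - 1) := hut
    _ ≤ K / (L - K) * E * exp (L * t) := by
      rw [mul_div_right_comm]
      exact mul_le_mul_of_nonneg_left (by linarith) (by positivity)

theorem waveformRelaxation_error_le
    (hf : ∀ t, LipschitzWith K (fun x => f x t))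
    (hx : ∀ t ∈ Icc 0 T, HasDerivAt x (f (x t) t) t)
    {X : ℕ → ℝ → ι → ℝ} (hX0 : ∀ I, X I 0 = x 0)
    (hXiter : ∀ I, ∀ t ∈ Icc 0 T, ∀ i,
      HasDerivAt (fun s => X (I + 1) s i) (f (update (X I t) i (X (I + 1) t i)) t i) t)
    (hKL : (K : ℝ) < L) {M : ℝ} (hM : 0 ≤ M)
    (hX : ∀ t ∈ Icc 0 T, ‖X 0 t - x t‖ ≤ M * exp (L * t)) (I : ℕ) :
    ∀ t ∈ Icc 0 T, ‖X I t - x t‖ ≤ (K / (L - K)) ^ I * M * exp (L * t) := by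
  induction I with
  | zero => simpa using hX
  | succ I ih =>
    intro t ht
    have := waveformRelaxation_sweep_error_le hf hx (hX0 (I + 1)) (hXiter I) hKL
      (by positivity) ih t ht
    rwa [pow_succ', mul_assoc _ _ M]

end WaveformRelaxation

theorem waveform_relaxation_converges_general
    (n : ℕ) (T : ℝ)
    (K : NNReal) (f : (Fin n → ℝ) → ℝ → (Fin n → ℝ))
    (hf : ∀ t : ℝ, LipschitzWith K (fun x => f x t))
    (x0 : Fin n → ℝ)
    -- the exact solution of the coupled system on [0, T]
    (x : ℝ → (Fin n → ℝ)) (hx0 : x 0 = x0)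
    (hx : ∀ t ∈ Set.Icc (0 : ℝ) T, HasDerivAt x (f (x t) t) t)
    -- the waveform relaxation iterates
    (X : ℕ → ℝ → (Fin n → ℝ))
    (hX0 : ∀ I, X I 0 = x0)
    (hXcont : ContinuousOn (X 0) (Set.Icc (0 : ℝ) T))
    (hXiter : ∀ I, ∀ t ∈ Set.Icc (0 : ℝ) T, ∀ i,
      HasDerivAt (fun s => X (I + 1) s i)
        (f (Function.update (X I t) i (X (I + 1) t i)) t i) t) :
    TendstoUniformlyOn (fun I t => X I t) x Filter.atTop (Set.Icc (0 : ℝ) T) := by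
  set L : ℝ := 2 * K + 1
  have hKL : (K : ℝ) < L := by linarith [K.coe_nonneg]
  have hq : K / (L - K) < 1 := (div_lt_one (by linarith)).2 (by linarith)
  obtain ⟨C, hC⟩ := isCompact_Icc.exists_bound_of_continuousOn
    (hXcont.sub fun t ht => (hx t ht).continuousAt.continuousWithinAt)
  have hX : ∀ t ∈ Icc 0 T, ‖X 0 t - x t‖ ≤ max C 0 * exp (L * t) := fun t ht =>
    (hC t ht).trans <| (le_max_left C 0).trans <|
      le_mul_of_one_le_right (le_max_right C 0) (one_le_exp (mul_nonneg (by positivity) ht.1))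
  have herr := waveformRelaxation_error_le hf hx (fun I => (hX0 I).trans hx0.symm) hXiter hKL
    (le_max_right C 0) hX
  refine tendstoUniformlyOn_of_forall_dist_le
    (a := fun I => (K / (L - K)) ^ I * max C 0 * exp (L * T)) (fun I t ht => ?_) ?_
  · rw [dist_comm, dist_eq_norm]
    exact (herr I t ht).trans <| by gcongr; exact ht.2
  · simpa using ((tendsto_pow_atTop_nhds_zero_of_lt_one (by positivity) hq).mul_const
      (max C 0)).mul_const (exp (L * T))

/-- Convergence of waveform relaxation: if the vector field `f` of the ODE
system `ẋ = f(x,t)` is globally Lipschitz in `x` uniformly in `t`, then the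
waveform relaxation iterates `X^{I+1}`, obtained by solving each component ODE
with the other components frozen to the previous iterate, converge uniformly
on any finite time interval `[0,T]` to the unique solution `x` of the full
system. -/
theorem waveform_relaxation_converges
    (n : ℕ) (T : ℝ) (hT : 0 < T)
    (K : NNReal) (f : (Fin n → ℝ) → ℝ → (Fin n → ℝ))
    (hf : ∀ t : ℝ, LipschitzWith K (fun x => f x t))
    (x0 : Fin n → ℝ)
    -- the exact solution of the coupled system on [0, T]
    (x : ℝ → (Fin n → ℝ)) (hx0 : x 0 = x0)
    (hx : ∀ t ∈ Set.Icc (0 : ℝ) T, HasDerivAt x (f (x t) t) t)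
    -- the waveform relaxation iterates
    (X : ℕ → ℝ → (Fin n → ℝ))
    (hX0 : ∀ I, X I 0 = x0)
    (hXcont : ContinuousOn (X 0) (Set.Icc (0 : ℝ) T))
    (hXiter : ∀ I, ∀ t ∈ Set.Icc (0 : ℝ) T, ∀ i,
      HasDerivAt (fun s => X (I + 1) s i)
        (f (Function.update (X I t) i (X (I + 1) t i)) t i) t) :
    TendstoUniformlyOn (fun I t => X I t) x Filter.atTop (Set.Icc (0 : ℝ) T) :=
  waveform_relaxation_converges_general n T K f hf x0 x hx0 hx X hX0 hXcont hXiter
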